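/- arXiv:2201.07439 — 7 statements merged into one kernel-verified Lean document; each statement's English description precedes it below -/
import Mathlib

section
/- If two permutations w and π in S_n differ by a single Knuth relation (of the first or second kind), then for every i, the value i appears before i+1 in the one-line notation of w if and only if i appears before i+1 in the one-line notation of π. -/
/-- One-line notation for an element of `S_n`: a list that is a permutation of `1, …, n`. -/
def IsOneLine (n : ℕ) (w : List ℕ) : Prop :=
  w.Perm ((List.range n).map (· + 1))

/-- `w` and `π` differ by a single elementary Knuth relation (first or second kind,
in either direction). -/
def KnuthStep (w π : List ℕ) : Prop :=
  ∃ u v : List ℕ, ∃ x y z : ℕ, x < y ∧ y < z ∧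
    ((w = u ++ y :: x :: z :: v ∧ π = u ++ y :: z :: x :: v) ∨
     (w = u ++ y :: z :: x :: v ∧ π = u ++ y :: x :: z :: v) ∨
     (w = u ++ x :: z :: y :: v ∧ π = u ++ z :: x :: y :: v) ∨
     (w = u ++ z :: x :: y :: v ∧ π = u ++ x :: z :: y :: v))

/-- Knuth equivalence: the reflexive-transitive closure of elementary Knuth relations. -/
def KnuthEquiv : List ℕ → List ℕ → Prop :=
  Relation.ReflTransGen KnuthStep

/-- `w` contains the pattern `3412`: a subsequence `(a, b, c, d)` with `c < d < a < b`. -/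
def Contains3412 (w : List ℕ) : Prop :=
  ∃ a b c d : ℕ, c < d ∧ d < a ∧ a < b ∧ [a, b, c, d].Sublist w

/-- `w` contains the pattern `4231`: a subsequence `(a, b, c, d)` with `d < b < c < a`. -/
def Contains4231 (w : List ℕ) : Prop :=
  ∃ a b c d : ℕ, d < b ∧ b < c ∧ c < a ∧ [a, b, c, d].Sublist w

/-- The decreasing run `hi, hi - 1, …, lo`. -/
def descFromTo (hi lo : ℕ) : List ℕ :=
  (List.range (hi + 1 - lo)).map (fun i => hi - i)

/-- The increasing run `lo, lo + 1, …, hi`. -/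
def ascFromTo (lo hi : ℕ) : List ℕ :=
  (List.range (hi + 1 - lo)).map (fun i => lo + i)

/-- The length of a longest strictly increasing subsequence of `w`. -/
def lisLen (w : List ℕ) : ℕ :=
  ((w.sublists.filter (fun l => decide (l.IsChain (· < ·)))).map List.length).foldr max 0

/-- The length of a longest strictly decreasing subsequence of `w`. -/
def ldsLen (w : List ℕ) : ℕ :=
  ((w.sublists.filter (fun l => decide (l.IsChain (· > ·)))).map List.length).foldr max 0

/-- The one-line word of the longest element of the Young subgroup attached to a
composition: each consecutive block is reversed.  `s` is the offset already consumed. -/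
def blockRevWord : List ℕ → ℕ → List ℕ
  | [], _ => []
  | m :: rest, s => descFromTo (s + m) (s + 1) ++ blockRevWord rest (s + m)

/-!
A Knuth relation swaps two adjacent entries `x < z` with a third value strictly between them,
so `z ≥ x + 2` and at most one of the swapped entries lies in `{i, i + 1}`. Restricting a word
to the letters `i, i + 1` (which decides whether `i` precedes `i + 1`) therefore does not see
the swap.
-/

namespace List

variable {α : Type*}

theorem sublist_iff_sublist_filter_mem [DecidableEq α] {s l : List α} :
    s <+ l ↔ s <+ l.filter (· ∈ s) := by
  refine ⟨fun h => ?_, fun h => h.trans filter_sublist⟩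
  simpa [filter_eq_self.2 fun a ha => decide_eq_true ha] using h.filter (· ∈ s)

theorem filter_append_cons_cons_comm {p : α → Bool} {a b : α} (hab : p a = false ∨ p b = false)
    (l r : List α) : (l ++ a :: b :: r).filter p = (l ++ b :: a :: r).filter p := by
  rcases hab with h | h <;> simp [filter_append, filter_cons, h]

theorem sublist_append_cons_cons_comm_iff [DecidableEq α] {s : List α} {a b : α}
    (hab : a ∉ s ∨ b ∉ s) (l r : List α) : s <+ l ++ a :: b :: r ↔ s <+ l ++ b :: a :: r := by
  rw [sublist_iff_sublist_filter_mem, filter_append_cons_cons_comm (by simpa using hab),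
    ← sublist_iff_sublist_filter_mem]

end List

theorem KnuthStep.exists_swap_adjacent {w π : List ℕ} (h : KnuthStep w π) :
    ∃ (l r : List ℕ) (a b : ℕ), (a + 2 ≤ b ∨ b + 2 ≤ a) ∧
      w = l ++ a :: b :: r ∧ π = l ++ b :: a :: r := by
  obtain ⟨u, v, x, y, z, hxy, hyz, h⟩ := h
  have hxz : x + 2 ≤ z := by omega
  rcases h with ⟨rfl, rfl⟩ | ⟨rfl, rfl⟩ | ⟨rfl, rfl⟩ | ⟨rfl, rfl⟩
  · exact ⟨u ++ [y], v, x, z, .inl hxz, by simp, by simp⟩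
  · exact ⟨u ++ [y], v, z, x, .inr hxz, by simp, by simp⟩
  · exact ⟨u, y :: v, x, z, .inl hxz, rfl, rfl⟩
  · exact ⟨u, y :: v, z, x, .inr hxz, rfl, rfl⟩

theorem stmt0_general (w π : List ℕ)
    (hstep : KnuthStep w π) (i : ℕ) :
    [i, i + 1].Sublist w ↔ [i, i + 1].Sublist π := by
  obtain ⟨l, r, a, b, hab, rfl, rfl⟩ := hstep.exists_swap_adjacent
  refine List.sublist_append_cons_cons_comm_iff ?_ l r
  simp only [List.mem_cons, List.not_mem_nil, or_false]
  omega

theorem stmt0 (n : ℕ) (w π : List ℕ) (hw : IsOneLine n w)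
    (hstep : KnuthStep w π) (i : ℕ) :
    [i, i + 1].Sublist w ↔ [i, i + 1].Sublist π :=
  stmt0_general w π hstep i
end

section
/- For every i, the relative order of the values i and i+1 in one-line notation is invariant under Knuth equivalence: if w and π are Knuth equivalent permutations in S_n, then i occurs before i+1 in w if and only if i occurs before i+1 in π. -/
/-
A Knuth relation `yxz ~ yzx` or `xzy ~ zxy` with `x < y < z` swaps two adjacent letters `x`, `z`
with `z - x ≥ 2`. Swapping adjacent letters `a, b` can only change whether `i` precedes `j` when
`{a, b} = {i, j}`, which cannot happen for `{i, i + 1}`.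
-/

lemma List.pair_sublist_append_swap {α : Type*} {i j a b : α} (hab : (a, b) ≠ (i, j)) :
    ∀ u v : List α, [i, j].Sublist (u ++ a :: b :: v) → [i, j].Sublist (u ++ b :: a :: v)
  | [], v, h => by
    rcases h with _ | ⟨_, h⟩ | ⟨_, h⟩
    · rcases h with _ | ⟨_, h⟩ | ⟨_, h⟩
      · exact (h.cons _).cons _
      · exact (h.cons _).cons_cons _
    · rcases h with _ | ⟨_, h⟩ | ⟨_, h⟩
      · exact (h.cons_cons _).cons _
      · exact absurd rfl hab
  | c :: u, v, h => by
    rcases h with _ | ⟨_, h⟩ | ⟨_, h⟩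
    · exact (List.pair_sublist_append_swap hab u v h).cons _
    · have hswap := ((List.Perm.swap b a v).append_left u).subset
      exact (List.singleton_sublist.mpr (hswap (List.singleton_sublist.mp h))).cons_cons _

lemma List.succ_pair_sublist_append_swap_iff {a b : ℕ} (hab : a + 1 < b) (i : ℕ)
    (u v : List ℕ) :
    [i, i + 1].Sublist (u ++ a :: b :: v) ↔ [i, i + 1].Sublist (u ++ b :: a :: v) :=
  ⟨List.pair_sublist_append_swap (by grind) u v, List.pair_sublist_append_swap (by grind) u v⟩

lemma KnuthStep.succ_pair_sublist_iff {w π : List ℕ} (h : KnuthStep w π) (i : ℕ) :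
    [i, i + 1].Sublist w ↔ [i, i + 1].Sublist π := by
  obtain ⟨u, v, x, y, z, hxy, hyz, hc⟩ := h
  have hxz : x + 1 < z := by omega
  rcases hc with ⟨rfl, rfl⟩ | ⟨rfl, rfl⟩ | ⟨rfl, rfl⟩ | ⟨rfl, rfl⟩
  · simpa using List.succ_pair_sublist_append_swap_iff hxz i (u ++ [y]) v
  · simpa using (List.succ_pair_sublist_append_swap_iff hxz i (u ++ [y]) v).symm
  · simpa using List.succ_pair_sublist_append_swap_iff hxz i u (y :: v)
  · simpa using (List.succ_pair_sublist_append_swap_iff hxz i u (y :: v)).symm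

theorem stmt1_general (w π : List ℕ)
    (h : KnuthEquiv w π) (i : ℕ) :
    [i, i + 1].Sublist w ↔ [i, i + 1].Sublist π := by
  induction h with
  | refl => exact Iff.rfl
  | tail _ hstep ih => exact ih.trans (hstep.succ_pair_sublist_iff i)

theorem stmt1 (n : ℕ) (w π : List ℕ) (hw : IsOneLine n w)
    (h : KnuthEquiv w π) (i : ℕ) :
    [i, i + 1].Sublist w ↔ [i, i + 1].Sublist π :=
  stmt1_general w π h i
end

section
/- Every permutation in S_n that is Knuth equivalent to the permutation (n, n-1, ..., 3, 1, 2) avoids both the pattern 3412 and the pattern 4231. -/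
/-! A Knuth relation swaps two adjacent letters, and when it creates an ascent `x … z` (in
`y z x ↦ y x z` or `z x y ↦ x z y`), its bottom `x` is at most the bottom of an existing ascent
(`y … z`, resp. `x … y`). Hence for each `k` the property "every ascent `p … q`, `p < q`, has
`p ≤ k`" is invariant under Knuth equivalence. The word `n … 3 1 2` has it for `k = 1`, whereas
`3412` and `4231` contain an ascent whose bottom is followed by a smaller positive letter. -/

lemma mem_descFromTo {hi lo m : ℕ} : m ∈ descFromTo hi lo ↔ lo ≤ m ∧ m ≤ hi := by
  simp only [descFromTo, List.mem_map, List.mem_range]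
  constructor
  · rintro ⟨i, hi', rfl⟩
    omega
  · rintro ⟨hlo, hhi⟩
    exact ⟨hi - m, by omega, by omega⟩

lemma pairwise_gt_descFromTo (hi lo : ℕ) : (descFromTo hi lo).Pairwise (· > ·) := by
  rw [descFromTo, List.pairwise_map]
  refine List.Pairwise.imp_of_mem ?_ List.pairwise_lt_range
  intro i j hi' hj' hij
  simp only [List.mem_range] at hi' hj'
  omega

lemma KnuthStep.perm {w π : List ℕ} (h : KnuthStep w π) : w.Perm π := by
  obtain ⟨u, v, x, y, z, -, -, h⟩ := h
  rcases h with ⟨rfl, rfl⟩ | ⟨rfl, rfl⟩ | ⟨rfl, rfl⟩ | ⟨rfl, rfl⟩ <;>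
    refine List.Perm.append_left u ?_
  · exact .cons y (.swap z x v)
  · exact .cons y (.swap x z v)
  · exact .swap z x (y :: v)
  · exact .swap x z (y :: v)

lemma KnuthEquiv.perm {w π : List ℕ} (h : KnuthEquiv w π) : w.Perm π := by
  induction h with
  | refl => rfl
  | tail _ hstep ih => exact ih.trans hstep.perm

lemma List.Pairwise.swap_of_rel {α : Type*} {R : α → α → Prop} {u v : List α} {a b : α}
    (h : (u ++ a :: b :: v).Pairwise R) (hba : R b a) : (u ++ b :: a :: v).Pairwise R := by
  simp only [List.pairwise_append, List.pairwise_cons, List.mem_cons] at h ⊢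
  grind

abbrev AscentsStartAtMost (k : ℕ) (w : List ℕ) : Prop :=
  w.Pairwise (fun p q => p < q → p ≤ k)

lemma AscentsStartAtMost.le_of_sublist {k p q : ℕ} {w : List ℕ} (hw : AscentsStartAtMost k w)
    (hsub : [p, q].Sublist w) (hpq : p < q) : p ≤ k :=
  List.pairwise_pair.mp (hw.sublist hsub) hpq

lemma AscentsStartAtMost.of_knuthStep {k : ℕ} {w π : List ℕ} (hw : AscentsStartAtMost k w)
    (h : KnuthStep w π) : AscentsStartAtMost k π := by
  obtain ⟨u, v, x, y, z, hxy, hyz, h⟩ := h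
  rcases h with ⟨rfl, rfl⟩ | ⟨rfl, rfl⟩ | ⟨rfl, rfl⟩ | ⟨rfl, rfl⟩
  · have hw' : AscentsStartAtMost k (u ++ [y] ++ x :: z :: v) := by simpa using hw
    simpa using hw'.swap_of_rel (fun _ => by omega)
  · have hy : y ≤ k := hw.le_of_sublist (by simp) hyz
    have hw' : AscentsStartAtMost k (u ++ [y] ++ z :: x :: v) := by simpa using hw
    simpa using hw'.swap_of_rel (fun _ => by omega)
  · exact hw.swap_of_rel (fun _ => by omega)
  · exact hw.swap_of_rel (fun _ => hw.le_of_sublist (by simp) hxy)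

lemma AscentsStartAtMost.of_knuthEquiv {k : ℕ} {w π : List ℕ} (hw : AscentsStartAtMost k w)
    (h : KnuthEquiv w π) : AscentsStartAtMost k π := by
  induction h with
  | refl => exact hw
  | tail _ hstep ih => exact ih.of_knuthStep hstep

lemma ascentsStartAtMost_one_descFromTo_append (n : ℕ) :
    AscentsStartAtMost 1 (descFromTo n 3 ++ [1, 2]) := by
  refine List.pairwise_append.mpr ⟨(pairwise_gt_descFromTo n 3).imp ?_, by simp, ?_⟩
  · intro p q hpq hlt
    omega
  · intro p hp q hq hlt
    have := mem_descFromTo.mp hp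
    simp only [List.mem_cons, List.not_mem_nil, or_false] at hq
    omega

lemma AscentsStartAtMost.not_contains3412 {w : List ℕ} (hw : AscentsStartAtMost 1 w) :
    ¬ Contains3412 w := by
  rintro ⟨a, b, c, d, hcd, hda, hab, hsub⟩
  have ha : a ≤ 1 := hw.le_of_sublist ((by simp : [a, b].Sublist [a, b, c, d]).trans hsub) hab
  omega

lemma AscentsStartAtMost.not_contains4231 {w : List ℕ} (hw : AscentsStartAtMost 1 w)
    (hpos : ∀ m ∈ w, 0 < m) : ¬ Contains4231 w := by
  rintro ⟨a, b, c, d, hdb, hbc, hca, hsub⟩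
  have hb : b ≤ 1 := hw.le_of_sublist ((by simp : [b, c].Sublist [a, b, c, d]).trans hsub) hbc
  have hd : 0 < d := hpos d (hsub.mem (by simp))
  omega

lemma pos_of_mem_descFromTo_append {n m : ℕ} (hm : m ∈ descFromTo n 3 ++ [1, 2]) : 0 < m := by
  rcases List.mem_append.mp hm with h | h
  · have := mem_descFromTo.mp h
    omega
  · simp only [List.mem_cons, List.not_mem_nil, or_false] at h
    omega

theorem stmt2_general (n : ℕ) (w : List ℕ)
    (hw : KnuthEquiv (descFromTo n 3 ++ [1, 2]) w) :
    ¬ Contains3412 w ∧ ¬ Contains4231 w := by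
  have hasc : AscentsStartAtMost 1 w :=
    (ascentsStartAtMost_one_descFromTo_append n).of_knuthEquiv hw
  have hpos : ∀ m ∈ w, 0 < m := fun _ hm =>
    pos_of_mem_descFromTo_append (hw.perm.symm.subset hm)
  exact ⟨hasc.not_contains3412, hasc.not_contains4231 hpos⟩

theorem stmt2 (n : ℕ) (hn : 3 ≤ n) (w : List ℕ)
    (hw : KnuthEquiv (descFromTo n 3 ++ [1, 2]) w) :
    ¬ Contains3412 w ∧ ¬ Contains4231 w :=
  stmt2_general n w hw
end

section
/- Every permutation in S_n that is Knuth equivalent to the permutation (n-1, n-2, ..., 2, 1, n) avoids both the pattern 3412 and the pattern 4231. -/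
/-!
Say `w` ascends only to `m` if all its letters are at most `m` and every pair `a` before
`b` with `a < b` has `b = m`, i.e. `w` is weakly decreasing once the letters `m` are erased.
The word `(n-1, …, 1, n)` ascends only to `n`, and Knuth moves preserve the property:
`y z x → y x z` creates the ascent `x z`, but `z = m` already because of `y z`; the reverse
move creates only a descent; and `x z y ↔ z x y` never applies, as the ascent `x y` would
force `z > y = m`. Finally, a `3412` contains two ascents with distinct tops, and a `4231`
a letter above the top of the ascent `2 3`.
-/

def AscendsOnlyTo (m : ℕ) (w : List ℕ) : Prop :=
  (∀ a ∈ w, a ≤ m) ∧ w.Pairwise (fun a b => a < b → b = m)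

namespace AscendsOnlyTo

variable {m : ℕ} {w : List ℕ}

lemma le (h : AscendsOnlyTo m w) {a : ℕ} (ha : a ∈ w) : a ≤ m := h.1 a ha

lemma eq_of_sublist (h : AscendsOnlyTo m w) {a b : ℕ} (hab : a < b)
    (hsub : [a, b].Sublist w) : b = m :=
  List.pairwise_pair.mp (h.2.sublist hsub) hab

lemma swap {u v : List ℕ} {b c : ℕ} (h : AscendsOnlyTo m (u ++ b :: c :: v))
    (hcb : c < b → b = m) : AscendsOnlyTo m (u ++ c :: b :: v) := by
  have hperm : (u ++ c :: b :: v).Perm (u ++ b :: c :: v) := .append_left u (.swap b c v)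
  refine ⟨fun a ha => h.le (hperm.subset ha), ?_⟩
  have hpw := h.2
  simp only [List.pairwise_append, List.pairwise_cons, List.mem_cons, or_imp, forall_and,
    forall_eq] at hpw ⊢
  tauto

lemma knuthStep (h : AscendsOnlyTo m w) {π : List ℕ} (hs : KnuthStep w π) :
    AscendsOnlyTo m π := by
  obtain ⟨u, v, x, y, z, hxy, hyz, ⟨rfl, rfl⟩ | ⟨rfl, rfl⟩ | ⟨rfl, -⟩ | ⟨rfl, -⟩⟩ := hs
  · have h' : AscendsOnlyTo m ((u ++ [y]) ++ x :: z :: v) := by simpa using h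
    simpa using h'.swap fun _ => by omega
  · have hz : z = m := h.eq_of_sublist hyz (by simp)
    have h' : AscendsOnlyTo m ((u ++ [y]) ++ z :: x :: v) := by simpa using h
    simpa using h'.swap fun _ => hz
  all_goals
    have hy : y = m := h.eq_of_sublist hxy (by simp)
    have hz : z ≤ m := h.le (by simp)
    omega

lemma knuthEquiv (h : AscendsOnlyTo m w) {π : List ℕ} (hwπ : KnuthEquiv w π) :
    AscendsOnlyTo m π := by
  induction hwπ with
  | refl => exact h
  | tail _ hs ih => exact ih.knuthStep hs

lemma not_contains3412 (h : AscendsOnlyTo m w) : ¬ Contains3412 w := by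
  rintro ⟨a, b, c, d, hcd, hda, hab, hsub⟩
  have hb : b = m := h.eq_of_sublist hab (.trans (by simp) hsub)
  have hd : d = m := h.eq_of_sublist hcd (.trans (by simp) hsub)
  omega

lemma not_contains4231 (h : AscendsOnlyTo m w) : ¬ Contains4231 w := by
  rintro ⟨a, b, c, d, hdb, hbc, hca, hsub⟩
  have hc : c = m := h.eq_of_sublist hbc (.trans (by simp) hsub)
  have ha : a ≤ m := h.le (hsub.subset (by simp))
  omega

end AscendsOnlyTo

lemma ascendsOnlyTo_descFromTo_append (n : ℕ) :
    AscendsOnlyTo n (descFromTo (n - 1) 1 ++ [n]) := by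
  refine ⟨by simp [descFromTo]; omega, ?_⟩
  refine List.pairwise_append.mpr ⟨?_, List.pairwise_singleton _ _, by simp⟩
  simp only [descFromTo, List.pairwise_map]
  exact List.pairwise_lt_range.imp fun _ _ => by omega

theorem stmt3_general (n : ℕ) (w : List ℕ)
    (hw : KnuthEquiv (descFromTo (n - 1) 1 ++ [n]) w) :
    ¬ Contains3412 w ∧ ¬ Contains4231 w :=
  have h := (ascendsOnlyTo_descFromTo_append n).knuthEquiv hw
  ⟨h.not_contains3412, h.not_contains4231⟩

theorem stmt3 (n : ℕ) (hn : 2 ≤ n) (w : List ℕ)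
    (hw : KnuthEquiv (descFromTo (n - 1) 1 ++ [n]) w) :
    ¬ Contains3412 w ∧ ¬ Contains4231 w :=
  stmt3_general n w hw
end

section
/- For any 2 ≤ k ≤ n, every permutation in S_n that is Knuth equivalent to the permutation (k, 1, 2, ..., k-1, k+1, ..., n) avoids both the pattern 3412 and the pattern 4231. -/
/-!
Knuth moves preserve the length of a longest increasing subsequence: one that runs through the
two swapped letters can be rerouted through the third letter of the move, whose value lies
between them. Reversal exchanges the two kinds of move and turns decreasing subsequences into
increasing ones, so the longest decreasing subsequence is preserved as well. The word
`k, 1, …, k-1, k+1, …, n` has an increasing subsequence of length `n - 1` and no decreasing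
one of length `3`. But in a word with distinct letters, an occurrence `a b c d` of `3412`
forces every increasing subsequence to omit `a, b` or `c, d`, and an occurrence of `4231`
contains the decreasing subsequence `a c d`.
-/

open scoped List

section

variable {α : Type*} {R : α → α → Prop}

theorem List.sublist_triple_cases {m : List α} {a b c : α} (h : m <+ [a, b, c]) :
    m = [] ∨ m = [a] ∨ m = [b] ∨ m = [c] ∨ m = [a, b] ∨ m = [a, c] ∨ m = [b, c] ∨
      m = [a, b, c] := by
  rw [← List.mem_sublists] at h
  simp only [List.sublists, List.foldr_cons, List.foldr_nil, List.flatMap_cons, List.flatMap_nil,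
    List.append_nil, List.cons_append, List.nil_append, List.mem_cons, List.not_mem_nil,
    or_false] at h
  tauto

theorem List.Sublist.pair_sublist_of_mem {w l : List α} {x y : α} (hl : l <+ w) (hw : w.Nodup)
    (hx : x ∈ l) (hy : y ∈ l) (hxy : [x, y] <+ w) : [x, y] <+ l := by
  induction hl with
  | slnil => simp at hx
  | cons a hl ih =>
    rw [List.nodup_cons] at hw
    have hxa : x ≠ a := fun h => hw.1 (h ▸ hl.subset hx)
    exact ih hw.2 hx hy ((List.sublist_cons_iff.1 hxy).resolve_right (by simp [hxa]))
  | @cons_cons l w a hl ih =>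
    rw [List.nodup_cons] at hw
    have mem_tail : ∀ {t}, t ∈ a :: l → t ≠ a → t ∈ l := fun ht hta => List.mem_of_ne_of_mem hta ht
    rcases List.sublist_cons_iff.1 hxy with hxy | ⟨r, hr, hy'⟩
    · have hxa : x ≠ a := fun h => hw.1 (h ▸ hxy.subset (by simp))
      have hya : y ≠ a := fun h => hw.1 (h ▸ hxy.subset (by simp))
      exact (ih hw.2 (mem_tail hx hxa) (mem_tail hy hya) hxy).cons a
    · obtain ⟨rfl, rfl⟩ := List.cons_eq_cons.1 hr
      have hya : y ≠ x := fun h => hw.1 (h ▸ hy'.subset (by simp))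
      exact (List.singleton_sublist.2 (mem_tail hy hya)).cons_cons x

theorem List.Sublist.length_add_two_le [DecidableEq α] {w l : List α} {x y : α} (hl : l <+ w)
    (hx : x ∈ w) (hy : y ∈ w) (hxy : x ≠ y) (hxl : x ∉ l) (hyl : y ∉ l) :
    l.length + 2 ≤ w.length := by
  have hsub : l <+ (w.erase x).erase y := by
    simpa [List.erase_of_not_mem hxl, List.erase_of_not_mem hyl] using (hl.erase x).erase y
  have hy' : y ∈ w.erase x := (List.mem_erase_of_ne hxy.symm).2 hy
  have := List.length_erase_of_mem hx
  have := List.length_erase_of_mem hy'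
  have := List.length_pos_of_mem hy'
  have := hsub.length_le
  omega

theorem List.IsChain.replace_pair {l₁ l₂ : List α} {a b a' b' : α}
    (h : (l₁ ++ [a, b] ++ l₂).IsChain R) (hab' : R a' b')
    (ha : ∀ o, R o a → R o a') (hb : ∀ o, R b o → R b' o) :
    (l₁ ++ [a', b'] ++ l₂).IsChain R := by
  rw [List.append_assoc, List.isChain_append, List.isChain_append] at h ⊢
  obtain ⟨h₁, ⟨-, h₂, hb₂⟩, ha₁⟩ := h
  refine ⟨h₁, ⟨by simpa using hab', h₂, ?_⟩, ?_⟩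
  · simp only [List.getLast?_cons_cons, List.getLast?_singleton, Option.mem_some_iff] at hb₂ ⊢
    rintro _ rfl y hy
    exact hb y (hb₂ b rfl y hy)
  · simp only [List.cons_append, List.head?_cons, Option.mem_some_iff] at ha₁ ⊢
    rintro x hx _ rfl
    exact ha x (ha₁ x hx a rfl)

variable [DecidableRel R]

def longestChainLen (R : α → α → Prop) [DecidableRel R] (w : List α) : ℕ :=
  ((w.sublists.filter (fun l => decide (l.IsChain R))).map List.length).foldr max 0

theorem le_longestChainLen {w l : List α} (hl : l <+ w) (hc : l.IsChain R) :
    l.length ≤ longestChainLen R w :=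
  List.le_max_of_le
    (List.mem_map_of_mem (List.mem_filter.2 ⟨List.mem_sublists.2 hl, decide_eq_true hc⟩)) le_rfl

theorem longestChainLen_le {w : List α} {N : ℕ}
    (h : ∀ l, l <+ w → l.IsChain R → l.length ≤ N) : longestChainLen R w ≤ N := by
  refine List.max_le_of_forall_le _ _ fun x hx => ?_
  obtain ⟨l, hl, rfl⟩ := List.mem_map.1 hx
  rw [List.mem_filter, List.mem_sublists, decide_eq_true_iff] at hl
  exact h l hl.1 hl.2

theorem longestChainLen_le_of_reroute {u v s t : List α}
    (H : ∀ m l₁ l₂, m <+ s → (l₁ ++ m ++ l₂).IsChain R →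
      ∃ m', m' <+ t ∧ m.length ≤ m'.length ∧ (l₁ ++ m' ++ l₂).IsChain R) :
    longestChainLen R (u ++ s ++ v) ≤ longestChainLen R (u ++ t ++ v) := by
  refine longestChainLen_le fun l hl hc => ?_
  rw [List.append_assoc] at hl
  obtain ⟨l₁, l₂₃, rfl, hl₁, hl₂₃⟩ := List.sublist_append_iff.1 hl
  obtain ⟨m, l₃, rfl, hm, hl₃⟩ := List.sublist_append_iff.1 hl₂₃
  rw [← List.append_assoc] at hc
  obtain ⟨m', hm', hlen, hc'⟩ := H m l₁ l₃ hm hc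
  have hsub : l₁ ++ m' ++ l₃ <+ u ++ t ++ v := (hl₁.append hm').append hl₃
  have := le_longestChainLen hsub hc'
  simp only [List.length_append] at this ⊢
  omega

end

theorem lisLen_eq_longestChainLen (w : List ℕ) : lisLen w = longestChainLen (· < ·) w := rfl

theorem ldsLen_eq_longestChainLen (w : List ℕ) : ldsLen w = longestChainLen (· > ·) w := rfl

theorem ldsLen_eq_lisLen_reverse (w : List ℕ) : ldsLen w = lisLen w.reverse := by
  rw [ldsLen_eq_longestChainLen, lisLen_eq_longestChainLen]
  refine le_antisymm (longestChainLen_le fun l hl hc => ?_) (longestChainLen_le fun l hl hc => ?_)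
  · simpa using le_longestChainLen hl.reverse (List.isChain_reverse.2 hc)
  · simpa using le_longestChainLen (List.sublist_reverse_iff.1 hl) (List.isChain_reverse.2 hc)

namespace KnuthStep

variable {w π : List ℕ}

theorem symm (h : KnuthStep w π) : KnuthStep π w := by
  obtain ⟨u, v, x, y, z, hxy, hyz, hcase⟩ := h
  exact ⟨u, v, x, y, z, hxy, hyz, by tauto⟩

theorem reverse (h : KnuthStep w π) : KnuthStep w.reverse π.reverse := by
  obtain ⟨u, v, x, y, z, hxy, hyz, hcase⟩ := h
  refine ⟨v.reverse, u.reverse, x, y, z, hxy, hyz, ?_⟩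
  rcases hcase with ⟨rfl, rfl⟩ | ⟨rfl, rfl⟩ | ⟨rfl, rfl⟩ | ⟨rfl, rfl⟩ <;> simp

theorem perm_s5 (h : KnuthStep w π) : w.Perm π := by
  obtain ⟨u, v, x, y, z, -, -, hcase⟩ := h
  rcases hcase with ⟨rfl, rfl⟩ | ⟨rfl, rfl⟩ | ⟨rfl, rfl⟩ | ⟨rfl, rfl⟩
  · exact ((List.Perm.swap z x v).cons y).append_left u
  · exact ((List.Perm.swap x z v).cons y).append_left u
  · exact (List.Perm.swap z x (y :: v)).append_left u
  · exact (List.Perm.swap x z (y :: v)).append_left u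

theorem lisLen_le (h : KnuthStep w π) : lisLen w ≤ lisLen π := by
  obtain ⟨u, v, x, y, z, hxy, hyz, hcase⟩ := h
  have hsplit : ∀ a b c : ℕ, u ++ a :: b :: c :: v = u ++ [a, b, c] ++ v := by simp
  rcases hcase with ⟨rfl, rfl⟩ | ⟨rfl, rfl⟩ | ⟨rfl, rfl⟩ | ⟨rfl, rfl⟩ <;>
  · rw [lisLen_eq_longestChainLen, lisLen_eq_longestChainLen, hsplit, hsplit]
    refine longestChainLen_le_of_reroute fun m l₁ l₂ hm hc => ?_
    rcases List.sublist_triple_cases hm with rfl | rfl | rfl | rfl | rfl | rfl | rfl | rfl <;>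
      -- A chain through the swapped letters `x, z` is rerouted through `y`.
      first
      | (refine ⟨_, ?_, le_rfl, hc⟩; simp; done)
      | exact absurd (hc.infix ⟨l₁, l₂, rfl⟩) (by simp; omega)
      | exact ⟨[y, z], by simp, by simp, hc.replace_pair hyz (fun _ h => h.trans hxy) fun _ h => h⟩
      | exact ⟨[x, y], by simp, by simp, hc.replace_pair hxy (fun _ h => h) fun _ h => hyz.trans h⟩

theorem lisLen_eq (h : KnuthStep w π) : lisLen w = lisLen π :=
  le_antisymm h.lisLen_le h.symm.lisLen_le

theorem ldsLen_eq (h : KnuthStep w π) : ldsLen w = ldsLen π := by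
  rw [ldsLen_eq_lisLen_reverse, ldsLen_eq_lisLen_reverse, h.reverse.lisLen_eq]

end KnuthStep

namespace KnuthEquiv

variable {w π : List ℕ}

theorem eq_of_knuthStep {β : Type*} {f : List ℕ → β} (hf : ∀ w π, KnuthStep w π → f w = f π)
    (h : KnuthEquiv w π) : f w = f π := by
  induction h with
  | refl => rfl
  | tail _ hs ih => exact ih.trans (hf _ _ hs)

theorem perm_s5 (h : KnuthEquiv w π) : w.Perm π := by
  induction h with
  | refl => rfl
  | tail _ hs ih => exact ih.trans hs.perm_s5

theorem lisLen_eq (h : KnuthEquiv w π) : lisLen w = lisLen π :=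
  h.eq_of_knuthStep fun _ _ => KnuthStep.lisLen_eq

theorem ldsLen_eq (h : KnuthEquiv w π) : ldsLen w = ldsLen π :=
  h.eq_of_knuthStep fun _ _ => KnuthStep.ldsLen_eq

end KnuthEquiv

theorem lisLen_add_two_le_of_contains3412 {w : List ℕ} (hw : w.Nodup) (h : Contains3412 w) :
    lisLen w + 2 ≤ w.length := by
  obtain ⟨a, b, c, d, hcd, hda, hab, hsub⟩ := h
  have hlen : 4 ≤ w.length := hsub.length_le
  suffices lisLen w ≤ w.length - 2 by omega
  refine longestChainLen_le fun l hl hc => ?_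
  have hinc : l.Pairwise (· < ·) := List.isChain_iff_pairwise.1 hc
  have not_both : ∀ {p q}, q < p → [p, q] <+ [a, b, c, d] → ¬(p ∈ l ∧ q ∈ l) := by
    rintro p q hqp hpq ⟨hp, hq⟩
    have := hinc.sublist (hl.pair_sublist_of_mem hw hp hq (hpq.trans hsub))
    simp only [List.pairwise_pair] at this
    omega
  have := not_both (by omega : c < a) (by simp)
  have := not_both (by omega : d < a) (by simp)
  have := not_both (by omega : c < b) (by simp)
  have := not_both (by omega : d < b) (by simp)
  have hmem : ∀ {t}, t ∈ [a, b, c, d] → t ∈ w := fun ht => hsub.subset ht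
  rcases (by tauto : (a ∉ l ∧ b ∉ l) ∨ (c ∉ l ∧ d ∉ l)) with ⟨ha, hb⟩ | ⟨hc, hd⟩
  · have := hl.length_add_two_le (hmem (by simp)) (hmem (by simp)) (by omega) ha hb
    omega
  · have := hl.length_add_two_le (hmem (by simp)) (hmem (by simp)) (by omega) hc hd
    omega

theorem three_le_ldsLen_of_contains4231 {w : List ℕ} (h : Contains4231 w) : 3 ≤ ldsLen w := by
  obtain ⟨a, b, c, d, hdb, hbc, hca, hsub⟩ := h
  exact le_longestChainLen ((by simp : [a, c, d] <+ [a, b, c, d]).trans hsub) (by simp; omega)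

theorem ldsLen_cons_le_two (a : ℕ) {L : List ℕ} (hL : L.Pairwise (· < ·)) :
    ldsLen (a :: L) ≤ 2 := by
  refine longestChainLen_le fun l hl hc => ?_
  have hdec : l.tail.length ≤ 1 := by
    match htail : l.tail with
    | [] | [_] => simp
    | b :: c :: _ =>
      have hbc := List.isChain_cons_cons.1 (htail ▸ hc.tail)
      have hcb := hL.sublist (htail ▸ hl.tail)
      simp only [List.pairwise_cons] at hcb
      exact absurd (hcb.1 c (by simp)) (by omega)
  simp only [List.length_tail] at hdec
  omega

theorem not_contains3412_and_not_contains4231_of_knuthEquiv_cons {a : ℕ} {L w : List ℕ}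
    (hL : L.Pairwise (· < ·)) (ha : a ∉ L) (h : KnuthEquiv (a :: L) w) :
    ¬Contains3412 w ∧ ¬Contains4231 w := by
  have hnd : w.Nodup := h.perm_s5.nodup_iff.1 (List.nodup_cons.2 ⟨ha, hL.nodup⟩)
  have hlen : w.length = L.length + 1 := by simp [← h.perm_s5.length_eq]
  have hlis : L.length ≤ lisLen w :=
    h.lisLen_eq ▸ le_longestChainLen (List.sublist_cons_self a L) (List.isChain_iff_pairwise.2 hL)
  have hlds : ldsLen w ≤ 2 := h.ldsLen_eq ▸ ldsLen_cons_le_two a hL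
  refine ⟨fun h3412 => ?_, fun h4231 => ?_⟩
  · have := lisLen_add_two_le_of_contains3412 hnd h3412
    omega
  · have := three_le_ldsLen_of_contains4231 h4231
    omega

theorem ascFromTo_eq_range' (lo hi : ℕ) : ascFromTo lo hi = List.range' lo (hi + 1 - lo) := by
  rw [ascFromTo, List.range'_eq_map_range]

theorem stmt5_general (n k : ℕ) (w : List ℕ)
    (hw : KnuthEquiv (k :: (ascFromTo 1 (k - 1) ++ ascFromTo (k + 1) n)) w) :
    ¬ Contains3412 w ∧ ¬ Contains4231 w := by
  refine not_contains3412_and_not_contains4231_of_knuthEquiv_cons ?_ ?_ hw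
  · simp only [ascFromTo_eq_range']
    refine List.pairwise_append.2 ⟨List.pairwise_lt_range', List.pairwise_lt_range', ?_⟩
    simp only [List.mem_range'_1]
    omega
  · simp only [ascFromTo_eq_range', List.mem_append, List.mem_range'_1]
    omega

theorem stmt5 (n k : ℕ) (hk : 2 ≤ k) (hkn : k ≤ n) (w : List ℕ)
    (hw : KnuthEquiv (k :: (ascFromTo 1 (k - 1) ++ ascFromTo (k + 1) n)) w) :
    ¬ Contains3412 w ∧ ¬ Contains4231 w :=
  stmt5_general n k w hw
end

section
/- For k ≥ 3, every permutation in S_{2k} that is Knuth equivalent to the permutation (k+1, k+2, ..., 2k, 1, 2, ..., k) contains the pattern 3412. -/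
/-!
Two features of the row word `(k+1, …, 2k, 1, …, k)` survive Knuth moves. First, the letters
`≤ k` keep the order `1, …, k` and the letters `> k` the order `k+1, …, 2k`: a move swaps adjacent
letters `x < z` next to an inversion between them, which forces `x ≤ k < z`. Second, no increasing
subsequence grows longer than `k`: one through both swapped letters is rerouted through the
witness `y`. Now split such a word at `k - 1`. The `k - 1` small letters up to it, followed by the
large letters after it, form an increasing subsequence, so at most one large letter follows
`k - 1`. As `k ≥ 3`, both `k + 1` and `k + 2` precede `k - 1`, while `k` follows it.
-/

open List

theorem List.Sublist.swap_adjacent_or {α : Type*} {l u v : List α} {a b : α}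
    (h : l <+ u ++ a :: b :: v) :
    l <+ u ++ b :: a :: v ∨ ∃ l₁ l₂, l = l₁ ++ a :: b :: l₂ ∧ l₁ <+ u ∧ l₂ <+ v := by
  obtain ⟨l₁, m, rfl, hl₁, hm⟩ := sublist_append_iff.mp h
  rcases sublist_cons_iff.mp hm with hm | ⟨r, rfl, hr⟩
  · exact .inl (hl₁.append (hm.trans ((sublist_cons_self a v).cons_cons b)))
  · rcases sublist_cons_iff.mp hr with hr | ⟨s, rfl, hs⟩
    · exact .inl (hl₁.append ((hr.cons_cons a).cons b))
    · exact .inr ⟨l₁, s, rfl, hl₁, hs⟩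

theorem lisLen_le_iff {w : List ℕ} {n : ℕ} :
    lisLen w ≤ n ↔ ∀ l, l <+ w → l.Pairwise (· < ·) → l.length ≤ n := by
  have foldr_max_le (L : List ℕ) : L.foldr max 0 ≤ n ↔ ∀ x ∈ L, x ≤ n := by
    induction L <;> simp [*]
  simp only [lisLen, foldr_max_le, mem_map, mem_filter, mem_sublists, decide_eq_true_eq,
    isChain_iff_pairwise]
  exact ⟨fun h l hl hinc => h _ ⟨l, ⟨hl, hinc⟩, rfl⟩,
    fun h _ ⟨l, ⟨hl, hinc⟩, hlen⟩ => hlen ▸ h l hl hinc⟩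

theorem lt_of_pairwise_filter {p : ℕ → Bool} {l : List ℕ} {a b : ℕ}
    (hl : (l.filter p).Pairwise (· < ·)) (hab : [a, b] <+ l) (ha : p a) (hb : p b) : a < b := by
  have : [a, b] <+ l.filter p := by simpa [ha, hb] using hab.filter p
  simpa using hl.sublist this

theorem le_and_lt_of_inversion {l : List ℕ} {t c d : ℕ}
    (hle : (l.filter (· ≤ t)).Pairwise (· < ·)) (hgt : (l.filter (t < ·)).Pairwise (· < ·))
    (hcd : [c, d] <+ l) (hdc : d < c) : d ≤ t ∧ t < c := by
  constructor <;> by_contra h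
  · have := lt_of_pairwise_filter hgt hcd (by simp; omega) (by simp; omega); omega
  · have := lt_of_pairwise_filter hle hcd (by simp; omega) (by simp; omega); omega

theorem KnuthStep.filter_eq {w π : List ℕ} {t : ℕ} (h : KnuthStep w π)
    (hle : (w.filter (· ≤ t)).Pairwise (· < ·)) (hgt : (w.filter (t < ·)).Pairwise (· < ·)) :
    π.filter (· ≤ t) = w.filter (· ≤ t) ∧ π.filter (t < ·) = w.filter (t < ·) := by
  obtain ⟨u, v, x, y, z, hxy, hyz, h⟩ := h
  have hxz : x ≤ t ∧ t < z := by
    rcases h with ⟨rfl, -⟩ | ⟨rfl, -⟩ | ⟨rfl, -⟩ | ⟨rfl, -⟩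
    · have := le_and_lt_of_inversion hle hgt (c := y) (d := x) (by simp) hxy; omega
    · have := le_and_lt_of_inversion hle hgt (c := z) (d := x) (by simp) (by omega); omega
    · have := le_and_lt_of_inversion hle hgt (c := z) (d := y) (by simp) hyz; omega
    · have := le_and_lt_of_inversion hle hgt (c := z) (d := x) (by simp) (by omega); omega
  have hx : ¬ t < x := by omega
  have hz : ¬ z ≤ t := by omega
  rcases h with ⟨rfl, rfl⟩ | ⟨rfl, rfl⟩ | ⟨rfl, rfl⟩ | ⟨rfl, rfl⟩ <;>
    simp [filter_append, filter_cons, hxz, hx, hz]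

theorem KnuthStep.exists_pairwise_sublist {w π l : List ℕ} (h : KnuthStep w π) (hl : l <+ π)
    (hinc : l.Pairwise (· < ·)) :
    ∃ l', l' <+ w ∧ l'.Pairwise (· < ·) ∧ l'.length = l.length := by
  obtain ⟨u, v, x, y, z, hxy, hyz, h⟩ := h
  -- Unless `l` takes the two swapped letters consecutively, it is a sublist of `w` as it is.
  -- If it does, they occur as `x, z`, and one of them is replaced by the witness `y`.
  rcases h with ⟨rfl, rfl⟩ | ⟨rfl, rfl⟩ | ⟨rfl, rfl⟩ | ⟨rfl, rfl⟩
  · rcases (show l <+ (u ++ [y]) ++ z :: x :: v by simpa using hl).swap_adjacent_or with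
      hl' | ⟨l₁, l₂, rfl, -, -⟩
    · exact ⟨l, by simpa using hl', hinc, rfl⟩
    · simp [pairwise_append] at hinc; omega
  · rcases (show l <+ (u ++ [y]) ++ x :: z :: v by simpa using hl).swap_adjacent_or with
      hl' | ⟨l₁, l₂, rfl, hl₁, hl₂⟩
    · exact ⟨l, by simpa using hl', hinc, rfl⟩
    · simp only [pairwise_append, pairwise_cons, mem_cons] at hinc
      refine ⟨l₁ ++ y :: z :: l₂, ?_, ?_, by simp⟩
      · have hl₁ : l₁ <+ u := hl₁.of_sublist_append_left fun a ha => by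
          have := (hinc.2.2 a ha x (.inl rfl)); simp; omega
        exact hl₁.append (((hl₂.cons x).cons_cons z).cons_cons y)
      · simp only [pairwise_append, pairwise_cons, mem_cons]
        grind
  · rcases (show l <+ u ++ z :: x :: y :: v by simpa using hl).swap_adjacent_or with
      hl' | ⟨l₁, l₂, rfl, -, -⟩
    · exact ⟨l, hl', hinc, rfl⟩
    · simp [pairwise_append] at hinc; omega
  · rcases hl.swap_adjacent_or with hl' | ⟨l₁, l₂, rfl, hl₁, hl₂⟩
    · exact ⟨l, hl', hinc, rfl⟩
    · simp only [pairwise_append, pairwise_cons, mem_cons] at hinc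
      refine ⟨l₁ ++ x :: y :: l₂, ?_, ?_, by simp⟩
      · have hl₂ : l₂ <+ v := by
          rcases sublist_cons_iff.mp hl₂ with hl₂ | ⟨r, rfl, -⟩
          · exact hl₂
          · have := hinc.2.1.2.1 y (by simp); omega
        exact hl₁.append ((hl₂.cons_cons y).cons_cons x |>.cons z)
      · simp only [pairwise_append, pairwise_cons, mem_cons]
        grind

theorem KnuthStep.lisLen_le_s14 {w π : List ℕ} (h : KnuthStep w π) : lisLen π ≤ lisLen w :=
  lisLen_le_iff.mpr fun _ hl hinc =>
    let ⟨l', hl', hinc', hlen⟩ := h.exists_pairwise_sublist hl hinc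
    hlen ▸ lisLen_le_iff.mp le_rfl l' hl' hinc'

theorem KnuthEquiv.lisLen_le_s14 {w₀ w : List ℕ} (h : KnuthEquiv w₀ w) : lisLen w ≤ lisLen w₀ := by
  induction h with
  | refl => exact le_rfl
  | tail _ hstep ih => exact hstep.lisLen_le_s14.trans ih

theorem KnuthEquiv.filter_eq {w₀ w : List ℕ} {t : ℕ} (h : KnuthEquiv w₀ w)
    (hle : (w₀.filter (· ≤ t)).Pairwise (· < ·)) (hgt : (w₀.filter (t < ·)).Pairwise (· < ·)) :
    w.filter (· ≤ t) = w₀.filter (· ≤ t) ∧ w.filter (t < ·) = w₀.filter (t < ·) := by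
  induction h with
  | refl => exact ⟨rfl, rfl⟩
  | tail _ hstep ih =>
    obtain ⟨ih₁, ih₂⟩ := ih
    obtain ⟨h₁, h₂⟩ := hstep.filter_eq (ih₁ ▸ hle) (ih₂ ▸ hgt)
    exact ⟨h₁.trans ih₁, h₂.trans ih₂⟩

theorem mem_ascFromTo {lo hi j : ℕ} : j ∈ ascFromTo lo hi ↔ lo ≤ j ∧ j ≤ hi := by
  simp only [ascFromTo, mem_map, mem_range]
  exact ⟨by rintro ⟨i, hi, rfl⟩; omega, fun h => ⟨j - lo, by omega, by omega⟩⟩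

theorem length_ascFromTo (lo hi : ℕ) : (ascFromTo lo hi).length = hi + 1 - lo := by
  simp [ascFromTo]

theorem pairwise_ascFromTo (lo hi : ℕ) : (ascFromTo lo hi).Pairwise (· < ·) := by
  rw [ascFromTo, pairwise_map]
  exact pairwise_lt_range.imp (by omega)

theorem ascFromTo_append {lo mid hi : ℕ} (h₁ : lo ≤ mid + 1) (h₂ : mid ≤ hi) :
    ascFromTo lo mid ++ ascFromTo (mid + 1) hi = ascFromTo lo hi := by
  rw [ascFromTo, ascFromTo, ascFromTo,
    show hi + 1 - lo = (mid + 1 - lo) + (hi + 1 - (mid + 1)) by omega, range_add, map_append,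
    map_map]
  congr 1
  exact map_congr_left fun i _ => by simp; omega

theorem ascFromTo_eq_pair {lo hi : ℕ} (h : hi = lo + 1) : ascFromTo lo hi = [lo, hi] := by
  subst h
  simp [ascFromTo, show lo + 1 + 1 - lo = 2 by omega, range_succ]

theorem lisLen_append_le {A B : List ℕ} (hBA : ∀ a ∈ A, ∀ b ∈ B, b < a) :
    lisLen (A ++ B) ≤ max A.length B.length := by
  refine lisLen_le_iff.mpr fun l hl hinc => ?_
  obtain ⟨l₁, l₂, rfl, h₁, h₂⟩ := sublist_append_iff.mp hl
  rcases eq_or_ne l₂ [] with rfl | hne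
  · simpa using h₁.length_le.trans (le_max_left _ _)
  · obtain ⟨b, hb⟩ := exists_mem_of_ne_nil l₂ hne
    obtain rfl : l₁ = [] := eq_nil_iff_forall_not_mem.mpr fun a ha =>
      ((pairwise_append.mp hinc).2.2 a ha b hb).not_gt (hBA a (h₁.subset ha) b (h₂.subset hb))
    simpa using h₂.length_le.trans (le_max_right _ _)

theorem length_filter_le_add_length_filter_gt_le_lisLen {A B : List ℕ} {t : ℕ}
    (hA : (A.filter (· ≤ t)).Pairwise (· < ·)) (hB : (B.filter (t < ·)).Pairwise (· < ·)) :
    (A.filter (· ≤ t)).length + (B.filter (t < ·)).length ≤ lisLen (A ++ B) := by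
  rw [← length_append]
  refine lisLen_le_iff.mp le_rfl _ (filter_sublist.append filter_sublist) ?_
  refine pairwise_append.mpr ⟨hA, hB, fun a ha b hb => ?_⟩
  have ha : a ≤ t := by simpa using (mem_filter.mp ha).2
  have hb : t < b := by simpa using (mem_filter.mp hb).2
  exact ha.trans_lt hb

theorem contains3412_of_filter_eq {k : ℕ} (hk : 3 ≤ k) {w : List ℕ}
    (hle : w.filter (· ≤ k) = ascFromTo 1 k)
    (hgt : w.filter (k < ·) = ascFromTo (k + 1) (2 * k)) (hlis : lisLen w ≤ k) :
    Contains3412 w := by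
  obtain ⟨w₁, w₂, rfl⟩ := append_of_mem (mem_of_mem_filter
    (hle ▸ mem_ascFromTo.mpr ⟨by omega, by omega⟩ : k - 1 ∈ w.filter (· ≤ k)))
  have hlow : w₁.filter (· ≤ k) = ascFromTo 1 (k - 2) ∧ w₂.filter (· ≤ k) = [k] := by
    rw [← ascFromTo_append (mid := k - 2) (by omega) (by omega), show k - 2 + 1 = k - 1 by omega,
      ascFromTo_eq_pair (lo := k - 1) (hi := k) (by omega), filter_append,
      filter_cons_of_pos (by simp)] at hle
    obtain ⟨h₁, -, h₂⟩ := (append_cons_inj_of_notMem (by simp [mem_ascFromTo]; omega)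
      (by simp; omega)).mp hle.symm
    exact ⟨h₁.symm, h₂.symm⟩
  have hhigh : w₁.filter (k < ·) ++ w₂.filter (k < ·) = ascFromTo (k + 1) (2 * k) := by
    rwa [filter_append, filter_cons_of_neg (by simp)] at hgt
  have hA : ((w₁ ++ [k - 1]).filter (· ≤ k)).Pairwise (· < ·) := by
    rw [filter_append, hlow.1, filter_cons_of_pos (by simp), filter_nil, pairwise_append]
    exact ⟨pairwise_ascFromTo _ _, by simp, fun a ha b hb => by
      simp only [mem_ascFromTo, mem_singleton] at ha hb; omega⟩
  have hB : (w₂.filter (k < ·)).Pairwise (· < ·) :=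
    (pairwise_ascFromTo _ _).sublist (hhigh ▸ sublist_append_right _ _)
  have hballot := length_filter_le_add_length_filter_gt_le_lisLen hA hB
  have hlen := congrArg length hhigh
  have hsingle : ([k - 1].filter (· ≤ k)).length = 1 := by simp
  simp only [append_assoc, singleton_append, filter_append, hlow.1, length_append,
    length_ascFromTo, hsingle] at hballot hlen
  have hpre : [k + 1, k + 2] <+: w₁.filter (k < ·) := by
    refine prefix_of_prefix_length_le ?_ (hhigh ▸ prefix_append _ _) (by simp; omega)
    rw [← ascFromTo_append (mid := k + 2) (by omega) (by omega), ascFromTo_eq_pair rfl]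
    exact prefix_append _ _
  have h₁ : [k + 1, k + 2] <+ w₁ := hpre.sublist.trans filter_sublist
  have h₂ : [k] <+ w₂ := hlow.2 ▸ filter_sublist
  exact ⟨k + 1, k + 2, k - 1, k, by omega, by omega, by omega,
    by simpa using h₁.append (h₂.cons_cons (k - 1))⟩

theorem stmt14 (k : ℕ) (hk : 3 ≤ k) (w : List ℕ)
    (hw : KnuthEquiv (ascFromTo (k + 1) (2 * k) ++ ascFromTo 1 k) w) :
    Contains3412 w := by
  have hle : (ascFromTo (k + 1) (2 * k) ++ ascFromTo 1 k).filter (· ≤ k) = ascFromTo 1 k := by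
    rw [filter_append, filter_eq_nil_iff.mpr fun a ha => by simp [mem_ascFromTo] at ha ⊢; omega,
      filter_eq_self.mpr fun a ha => by simp [mem_ascFromTo] at ha ⊢; omega, nil_append]
  have hgt : (ascFromTo (k + 1) (2 * k) ++ ascFromTo 1 k).filter (k < ·) =
      ascFromTo (k + 1) (2 * k) := by
    rw [filter_append, filter_eq_self.mpr fun a ha => by simp [mem_ascFromTo] at ha ⊢; omega,
      filter_eq_nil_iff.mpr fun a ha => by simp [mem_ascFromTo] at ha ⊢; omega, append_nil]
  obtain ⟨hle', hgt'⟩ := hw.filter_eq (by rw [hle]; exact pairwise_ascFromTo _ _)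
    (by rw [hgt]; exact pairwise_ascFromTo _ _)
  have hlis : lisLen w ≤ k := by
    refine hw.lisLen_le_s14.trans ((lisLen_append_le fun a ha b hb => ?_).trans ?_)
    · simp only [mem_ascFromTo] at ha hb; omega
    · simp only [length_ascFromTo]; omega
  exact contains3412_of_filter_eq hk (hle'.trans hle) (hgt'.trans hgt) hlis
end

section
/- Let w be a permutation Knuth equivalent to the column word of a two-column standard Young tableau in which the entries k, k+1, k+2, k+3 occupy consecutive rows with k, k+2 in the first column and k+1, k+3 in the second column, and k-2, k-1 occupy the row above with k-2 in the first column. Then w contains the subsequence (k+2, k, k+1, k-1) in this order, and in particular contains the pattern 4231. -/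
/-!
Restricting a word to the values of an interval commutes with Knuth equivalence, and Knuth
moves commute with order-preserving relabelling. Restricted to the values `k - 2, …, k + 3`, the
column word is `5 3 1 6 4 2` shifted by `k - 3`, so the restriction of `w` is a shifted member of
the Knuth class of `531642`. That class has only five elements, and each contains `5 3 4 2`.
-/

/-- A first-kind move swaps the last two letters of a window when the first lies strictly between
them; a second-kind move swaps the first two when the last lies strictly between them. -/
def knuthMoves : List ℕ → List (List ℕ)
  | a :: b :: c :: v =>
      (if min b c < a ∧ a < max b c then [a :: c :: b :: v] else []) ++
      (if min a b < c ∧ c < max a b then [b :: a :: c :: v] else []) ++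
      (knuthMoves (b :: c :: v)).map (a :: ·)
  | _ => []

theorem map_cons_knuthMoves_subset (a : ℕ) (l : List ℕ) :
    (knuthMoves l).map (a :: ·) ⊆ knuthMoves (a :: l) := by
  rcases l with _ | ⟨b, _ | ⟨c, v⟩⟩
  · simp [knuthMoves]
  · simp [knuthMoves]
  · simp only [knuthMoves]
    exact List.subset_append_right _ _

theorem append_mem_knuthMoves_append {w π : List ℕ} (u : List ℕ) (h : π ∈ knuthMoves w) :
    u ++ π ∈ knuthMoves (u ++ w) := by
  induction u with
  | nil => exact h
  | cons a u ih => exact map_cons_knuthMoves_subset a _ (List.mem_map_of_mem ih)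

theorem KnuthStep.mem_knuthMoves {w π : List ℕ} (h : KnuthStep w π) : π ∈ knuthMoves w := by
  obtain ⟨u, v, x, y, z, hxy, hyz, hmove⟩ := h
  rcases hmove with ⟨rfl, rfl⟩ | ⟨rfl, rfl⟩ | ⟨rfl, rfl⟩ | ⟨rfl, rfl⟩ <;>
    refine append_mem_knuthMoves_append u ?_ <;>
    simp only [knuthMoves, List.mem_append] <;>
    grind

theorem exists_of_map_eq_append_cons₃ {g : ℕ → ℕ} {l u v : List ℕ} {a b c : ℕ}
    (h : l.map g = u ++ a :: b :: c :: v) :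
    ∃ u' a' b' c' v', l = u' ++ a' :: b' :: c' :: v' ∧
      u'.map g = u ∧ g a' = a ∧ g b' = b ∧ g c' = c ∧ v'.map g = v := by
  simp only [List.map_eq_append_iff, List.map_eq_cons_iff] at h
  obtain ⟨u', _, rfl, hu, a', _, rfl, ha, b', _, rfl, hb, c', v', rfl, hc, hv⟩ := h
  exact ⟨u', a', b', c', v', rfl, hu, ha, hb, hc, hv⟩

theorem KnuthStep.exists_map_eq {g : ℕ → ℕ} (hg : StrictMono g) {l π : List ℕ}
    (h : KnuthStep (l.map g) π) : ∃ l', l'.map g = π ∧ KnuthStep l l' := by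
  obtain ⟨u, v, x, y, z, hxy, hyz, hmove⟩ := h
  rcases hmove with ⟨hl, rfl⟩ | ⟨hl, rfl⟩ | ⟨hl, rfl⟩ | ⟨hl, rfl⟩ <;>
    obtain ⟨u, a, b, c, v, rfl, rfl, rfl, rfl, rfl, rfl⟩ := exists_of_map_eq_append_cons₃ hl <;>
    rw [hg.lt_iff_lt] at hxy hyz
  · exact ⟨_, by simp, u, v, b, a, c, hxy, hyz, .inl ⟨rfl, rfl⟩⟩
  · exact ⟨_, by simp, u, v, c, a, b, hxy, hyz, .inr <| .inl ⟨rfl, rfl⟩⟩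
  · exact ⟨_, by simp, u, v, a, c, b, hxy, hyz, .inr <| .inr <| .inl ⟨rfl, rfl⟩⟩
  · exact ⟨_, by simp, u, v, b, c, a, hxy, hyz, .inr <| .inr <| .inr ⟨rfl, rfl⟩⟩

theorem KnuthEquiv.exists_map_eq {g : ℕ → ℕ} (hg : StrictMono g) {l π : List ℕ}
    (h : KnuthEquiv (l.map g) π) : ∃ l', l'.map g = π ∧ KnuthEquiv l l' := by
  induction h with
  | refl => exact ⟨l, rfl, .refl⟩
  | tail _ hstep ih =>
    obtain ⟨l', rfl, hl'⟩ := ih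
    obtain ⟨l'', rfl, hstep'⟩ := hstep.exists_map_eq hg
    exact ⟨l'', rfl, hl'.tail hstep'⟩

/-- If both outer letters `x < z` of a move survive, so does the middle value `y`; otherwise the
two surviving letters appear in the same order on both sides. -/
theorem KnuthStep.filter_mem {s : Set ℕ} [DecidablePred (· ∈ s)] (hs : s.OrdConnected)
    {w π : List ℕ} (h : KnuthStep w π) :
    w.filter (· ∈ s) = π.filter (· ∈ s) ∨ KnuthStep (w.filter (· ∈ s)) (π.filter (· ∈ s)) := by
  obtain ⟨u, v, x, y, z, hxy, hyz, hmove⟩ := h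
  have hy : x ∈ s → z ∈ s → y ∈ s := fun hx hz => hs.out hx hz ⟨hxy.le, hyz.le⟩
  rcases hmove with ⟨rfl, rfl⟩ | ⟨rfl, rfl⟩ | ⟨rfl, rfl⟩ | ⟨rfl, rfl⟩ <;>
    by_cases hx : x ∈ s <;> by_cases hz : z ∈ s <;> by_cases hy' : y ∈ s <;>
    simp_all [List.filter_append] <;>
    exact Or.inr ⟨u.filter (· ∈ s), v.filter (· ∈ s), x, y, z, hxy, hyz, by simp⟩

theorem KnuthEquiv.filter_mem {s : Set ℕ} [DecidablePred (· ∈ s)] (hs : s.OrdConnected)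
    {w π : List ℕ} (h : KnuthEquiv w π) :
    KnuthEquiv (w.filter (· ∈ s)) (π.filter (· ∈ s)) := by
  induction h with
  | refl => exact .refl
  | tail _ hstep ih =>
    rcases hstep.filter_mem hs with heq | hstep'
    · rwa [← heq]
    · exact ih.tail hstep'

def knuthClass531642 : List (List ℕ) :=
  [[5, 3, 1, 6, 4, 2], [5, 3, 6, 1, 4, 2], [5, 3, 6, 4, 1, 2], [5, 6, 3, 1, 4, 2],
    [5, 6, 3, 4, 1, 2]]

theorem knuthMoves_mem_knuthClass531642 :
    ∀ w ∈ knuthClass531642, ∀ π ∈ knuthMoves w, π ∈ knuthClass531642 := by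
  decide

theorem sublist_of_mem_knuthClass531642 :
    ∀ π ∈ knuthClass531642, [5, 3, 4, 2].Sublist π := by
  decide

theorem KnuthEquiv.sublist_5342_of_531642 {π : List ℕ} (h : KnuthEquiv [5, 3, 1, 6, 4, 2] π) :
    [5, 3, 4, 2].Sublist π := by
  refine sublist_of_mem_knuthClass531642 π ?_
  induction h with
  | refl => decide
  | tail _ hstep ih => exact knuthMoves_mem_knuthClass531642 _ ih _ hstep.mem_knuthMoves

theorem filter_eq_of_pairwise_of_disjoint {p : ℕ → Bool} {c c' m m' : List ℕ}
    (hc : c.Pairwise (· < ·)) (hm : m.Pairwise (· < ·)) (hdisj : c.Disjoint c')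
    (hmc : m ⊆ c) (hm'c' : m' ⊆ c') (hmp : ∀ t ∈ m, p t)
    (hcover : ∀ t, p t → t ∈ m ∨ t ∈ m') :
    c.filter p = m := by
  refine (hc.filter p).eq_of_mem_iff hm fun t => ?_
  rw [List.mem_filter]
  refine ⟨fun ⟨htc, hpt⟩ => (hcover t hpt).resolve_right fun ht => hdisj htc (hm'c' ht),
    fun ht => ⟨hmc ht, hmp t ht⟩⟩

theorem stmt16_general (c1 c2 : List ℕ) (k i : ℕ) (hk : 3 ≤ k)
    (hc1 : c1.Chain' (· < ·)) (hc2 : c2.Chain' (· < ·))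
    (hstd : IsOneLine (c1.length + c2.length) (c1 ++ c2))
    (h1 : c1[i]? = some (k - 2)) (h2 : c2[i]? = some (k - 1))
    (h3 : c1[i + 1]? = some k) (h4 : c2[i + 1]? = some (k + 1))
    (h5 : c1[i + 2]? = some (k + 2)) (h6 : c2[i + 2]? = some (k + 3))
    (w : List ℕ) (hw : KnuthEquiv (c1.reverse ++ c2.reverse) w) :
    [k + 2, k, k + 1, k - 1].Sublist w ∧ Contains4231 w := by
  let s := Set.Icc (k - 2) (k + 3)
  have hdisj : c1.Disjoint c2 :=
    (List.nodup_append'.mp (hstd.nodup_iff.mpr (List.nodup_range.map (add_left_injective 1)))).2.2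
  have hm1 : [k - 2, k, k + 2] ⊆ c1 := by
    simp [List.mem_of_getElem? h1, List.mem_of_getElem? h3, List.mem_of_getElem? h5]
  have hm2 : [k - 1, k + 1, k + 3] ⊆ c2 := by
    simp [List.mem_of_getElem? h2, List.mem_of_getElem? h4, List.mem_of_getElem? h6]
  have hcover : ∀ t, decide (t ∈ s) → t ∈ [k - 2, k, k + 2] ∨ t ∈ [k - 1, k + 1, k + 3] := by
    simp [s]; omega
  have hcol1 : c1.filter (· ∈ s) = [k - 2, k, k + 2] :=
    filter_eq_of_pairwise_of_disjoint (List.isChain_iff_pairwise.mp hc1) (by simp; omega) hdisj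
      hm1 hm2 (by simp [s]; omega) hcover
  have hcol2 : c2.filter (· ∈ s) = [k - 1, k + 1, k + 3] :=
    filter_eq_of_pairwise_of_disjoint (List.isChain_iff_pairwise.mp hc2) (by simp; omega)
      hdisj.symm hm2 hm1 (by simp [s]; omega) fun t ht => (hcover t ht).symm
  have hwindow : (c1.reverse ++ c2.reverse).filter (· ∈ s) =
      [5, 3, 1, 6, 4, 2].map (· + (k - 3)) := by
    rw [List.filter_append, List.filter_reverse, List.filter_reverse, hcol1, hcol2]
    simp; omega
  obtain ⟨π, hπ, hknuth⟩ := (hwindow ▸ hw.filter_mem Set.ordConnected_Icc).exists_map_eq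
    (strictMono_id.add_const (k - 3))
  have hshift : [k + 2, k, k + 1, k - 1] = [5, 3, 4, 2].map (· + (k - 3)) := by
    simp; omega
  have hsub : [k + 2, k, k + 1, k - 1].Sublist w :=
    hshift ▸ (hknuth.sublist_5342_of_531642.map _).trans (hπ ▸ List.filter_sublist)
  exact ⟨hsub, k + 2, k, k + 1, k - 1, by omega, by omega, by omega, hsub⟩

theorem stmt16 (c1 c2 : List ℕ) (k i : ℕ) (hk : 3 ≤ k)
    (hc1 : c1.Chain' (· < ·)) (hc2 : c2.Chain' (· < ·))
    (hlen : c2.length ≤ c1.length)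
    (hrow : ∀ j (hj : j < c2.length),
      c1[j]'(Nat.lt_of_lt_of_le hj hlen) < c2[j]'hj)
    (hstd : IsOneLine (c1.length + c2.length) (c1 ++ c2))
    (h1 : c1[i]? = some (k - 2)) (h2 : c2[i]? = some (k - 1))
    (h3 : c1[i + 1]? = some k) (h4 : c2[i + 1]? = some (k + 1))
    (h5 : c1[i + 2]? = some (k + 2)) (h6 : c2[i + 2]? = some (k + 3))
    (w : List ℕ) (hw : KnuthEquiv (c1.reverse ++ c2.reverse) w) :
    [k + 2, k, k + 1, k - 1].Sublist w ∧ Contains4231 w :=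
  stmt16_general c1 c2 k i hk hc1 hc2 hstd h1 h2 h3 h4 h5 h6 w hw
end
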